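/- arXiv:1902.10772 — 6 statements merged into one kernel-verified Lean document; each statement's English description precedes it below -/
import Mathlib

section
/- Let F : ℝ₊ⁿ ⇉ ℝ₊ᵐ be a set-valued mapping with nonempty graph, and define F̂ : ℝ₊ⁿ ⇉ ℝ₊ᵐ by F̂(x) := ⋃_{λ ≥ 1} (1/λ)·F(λx). Then: (1) F(x) ⊆ F̂(x) for every x ∈ ℝ₊ⁿ; (2) F̂ is co-radiant; (3) if G : ℝ₊ⁿ ⇉ ℝ₊ᵐ is co-radiant and F(x) ⊆ G(x) for all x, then F̂(x) ⊆ G(x) for all x; (4) if F(x) is normal for every x, then F̂(x) is normal for every x. -/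
open scoped Pointwise

/-- A set `C ⊆ ℝ₊ᵐ` is normal if `x ∈ C`, `0 ≤ y ≤ x` imply `y ∈ C`. -/
def IsNormal {m : ℕ} (C : Set (Fin m → ℝ)) : Prop :=
  ∀ x ∈ C, ∀ y : Fin m → ℝ, 0 ≤ y → y ≤ x → y ∈ C

/-- A set-valued mapping `F : ℝ₊ⁿ ⇉ ℝ₊ᵐ` is increasing if `x ≤ y` implies `F x ⊆ F y`. -/
def IncreasingMap {n m : ℕ} (F : (Fin n → ℝ) → Set (Fin m → ℝ)) : Prop :=
  ∀ x y : Fin n → ℝ, 0 ≤ x → x ≤ y → F x ⊆ F y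

/-- A set-valued mapping `F : ℝ₊ⁿ ⇉ ℝ₊ᵐ` is co-radiant if `t • F x ⊆ F (t • x)` for every
`x ∈ ℝ₊ⁿ` and `t ∈ (0, 1]`. -/
def CoRadiantMap {n m : ℕ} (F : (Fin n → ℝ) → Set (Fin m → ℝ)) : Prop :=
  ∀ x : Fin n → ℝ, 0 ≤ x → ∀ t : ℝ, 0 < t → t ≤ 1 → t • F x ⊆ F (t • x)

/-- The graph of a set-valued mapping `F : ℝ₊ⁿ ⇉ ℝ₊ᵐ`, as a subset of `ℝ₊ⁿ × ℝ₊ᵐ`. -/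
def graph {n m : ℕ} (F : (Fin n → ℝ) → Set (Fin m → ℝ)) :
    Set ((Fin n → ℝ) × (Fin m → ℝ)) :=
  {p | 0 ≤ p.1 ∧ p.2 ∈ F p.1}

theorem stmt_3 {n m : ℕ} (F : (Fin n → ℝ) → Set (Fin m → ℝ))
    (hval : ∀ x : Fin n → ℝ, 0 ≤ x → ∀ y ∈ F x, 0 ≤ y)
    (hne : (graph F).Nonempty)
    (Fhat : (Fin n → ℝ) → Set (Fin m → ℝ))
    (hFhat : ∀ x : Fin n → ℝ, Fhat x = ⋃ (t : ℝ) (_ : 1 ≤ t), t⁻¹ • F (t • x)) :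
    (∀ x : Fin n → ℝ, 0 ≤ x → F x ⊆ Fhat x) ∧
    CoRadiantMap Fhat ∧
    (∀ G : (Fin n → ℝ) → Set (Fin m → ℝ), (∀ x : Fin n → ℝ, 0 ≤ x → ∀ y ∈ G x, 0 ≤ y) →
      CoRadiantMap G → (∀ x : Fin n → ℝ, 0 ≤ x → F x ⊆ G x) →
      ∀ x : Fin n → ℝ, 0 ≤ x → Fhat x ⊆ G x) ∧
    ((∀ x : Fin n → ℝ, 0 ≤ x → IsNormal (F x)) →
      ∀ x : Fin n → ℝ, 0 ≤ x → IsNormal (Fhat x)) := by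
  refine ⟨?_, ?_, ?_, ?_⟩
  · intro x hx y hy
    rw [hFhat]
    refine Set.mem_iUnion₂.2 ⟨1, le_refl 1, ?_⟩
    simpa using hy
  · intro x hx t ht ht1 z hz
    obtain ⟨y, hy, rfl⟩ := hz
    rw [hFhat] at hy ⊢
    obtain ⟨s, hs, w, hw, rfl⟩ := Set.mem_iUnion₂.1 hy
    refine Set.mem_iUnion₂.2 ⟨s / t, le_trans hs (by
      rw [le_div_iff₀ ht]; nlinarith [le_trans zero_le_one hs]), ⟨w, ?_, ?_⟩⟩
    · have : (s / t) • (t • x) = s • x := by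
        rw [smul_smul, div_mul_cancel₀ _ (ne_of_gt ht)]
      rw [this]; exact hw
    · show (s / t)⁻¹ • w = t • s⁻¹ • w
      rw [smul_smul]
      congr 1
      field_simp
  · intro G hGval hG hFG x hx y hy
    rw [hFhat] at hy
    obtain ⟨t, ht, w, hw, rfl⟩ := Set.mem_iUnion₂.1 hy
    have ht0 : (0:ℝ) < t := lt_of_lt_of_le one_pos ht
    have htx : (0:Fin n → ℝ) ≤ t • x := smul_nonneg (le_of_lt ht0) hx
    have := hG (t • x) htx t⁻¹ (inv_pos.2 ht0) (inv_le_one_of_one_le₀ ht)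
      (Set.smul_mem_smul_set (hFG (t • x) htx hw))
    rwa [smul_smul, inv_mul_cancel₀ (ne_of_gt ht0), one_smul] at this
  · intro hnorm x hx y hy z hz0 hzy
    rw [hFhat] at hy ⊢
    obtain ⟨t, ht, w, hw, rfl⟩ := Set.mem_iUnion₂.1 hy
    have ht0 : (0:ℝ) < t := lt_of_lt_of_le one_pos ht
    have htx : (0:Fin n → ℝ) ≤ t • x := smul_nonneg (le_of_lt ht0) hx
    refine Set.mem_iUnion₂.2 ⟨t, ht, t • z, ?_, ?_⟩
    · refine hnorm (t • x) htx w hw (t • z) (smul_nonneg (le_of_lt ht0) hz0) ?_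
      have := smul_le_smul_of_nonneg_left hzy (le_of_lt ht0)
      calc t • z ≤ t • (t⁻¹ • w) := this
        _ = w := by rw [smul_smul, mul_inv_cancel₀ (ne_of_gt ht0), one_smul]
    · show t⁻¹ • t • z = z
      rw [smul_smul, inv_mul_cancel₀ (ne_of_gt ht0), one_smul]
end

section
/- Let F : ℝ₊ⁿ ⇉ ℝ₊ᵐ be an increasing co-radiant mapping taking only normal values. If F(x̄) is nonempty and bounded for some x̄ ∈ ℝ₊₊ⁿ, then F is Lipschitz on every compact set K ⊆ ℝ₊₊ⁿ, i.e., there exists M > 0 such that F(x) ⊆ F(y) + M‖x − y‖_∞ B_∞ for all x, y ∈ K (where B_∞ is the closed unit ball of the maximum norm). -/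
open scoped Pointwise

theorem stmt_6 {n m : ℕ} (F : (Fin n → ℝ) → Set (Fin m → ℝ))
    (hval : ∀ x : Fin n → ℝ, 0 ≤ x → ∀ y ∈ F x, 0 ≤ y)
    (hinc : IncreasingMap F) (hcor : CoRadiantMap F)
    (hnorm : ∀ x : Fin n → ℝ, 0 ≤ x → IsNormal (F x))
    (xbar : Fin n → ℝ) (hxbar : ∀ i, 0 < xbar i)
    (hne : (F xbar).Nonempty) (hbd : Bornology.IsBounded (F xbar)) :
    ∀ K : Set (Fin n → ℝ), K ⊆ {x | ∀ i, 0 < x i} → IsCompact K →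
      ∃ M : ℝ, 0 < M ∧ ∀ x ∈ K, ∀ y ∈ K,
        F x ⊆ F y + Metric.closedBall 0 (M * ‖x - y‖) := by
  intro K hKpos hK
  rcases K.eq_empty_or_nonempty with rfl | hKne
  · exact ⟨1, one_pos, fun x hx => absurd hx (Set.notMem_empty x)⟩
  -- lower bound a on all coordinates over K
  obtain ⟨a, ha0, haK⟩ : ∃ a : ℝ, 0 < a ∧ ∀ x ∈ K, ∀ i, a ≤ x i := by
    rcases isEmpty_or_nonempty (Fin n) with hn | hn
    · exact ⟨1, one_pos, fun x _ i => hn.elim i⟩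
    · have hmins : ∀ i : Fin n, ∃ a : ℝ, 0 < a ∧ ∀ x ∈ K, a ≤ x i := by
        intro i
        obtain ⟨x0, hx0K, hx0⟩ := hK.exists_isMinOn hKne ((continuous_apply i).continuousOn)
        exact ⟨x0 i, hKpos hx0K i, fun x hx => hx0 hx⟩
      choose g hg1 hg2 using hmins
      refine ⟨Finset.univ.inf' Finset.univ_nonempty g, ?_, fun x hx i => ?_⟩
      · rw [Finset.lt_inf'_iff]; exact fun i _ => hg1 i
      · exact le_trans (Finset.inf'_le g (Finset.mem_univ i)) (hg2 i x hx)
  -- s ≥ 1 with x ≤ s • xbar on K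
  obtain ⟨s, hs1, hsK⟩ : ∃ s : ℝ, 1 ≤ s ∧ ∀ x ∈ K, x ≤ s • xbar := by
    rcases isEmpty_or_nonempty (Fin n) with hn | hn
    · exact ⟨1, le_refl 1, fun x _ i => hn.elim i⟩
    · obtain ⟨r, hr⟩ := hK.isBounded.subset_closedBall 0
      set c := Finset.univ.inf' Finset.univ_nonempty xbar with hc
      have hc0 : 0 < c := by rw [hc, Finset.lt_inf'_iff]; exact fun i _ => hxbar i
      have hcle : ∀ i, c ≤ xbar i := fun i => Finset.inf'_le xbar (Finset.mem_univ i)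
      refine ⟨max 1 (r / c), le_max_left _ _, fun x hx i => ?_⟩
      have hxr : x i ≤ r := by
        have h1 := hr hx
        rw [Metric.mem_closedBall, dist_zero_right] at h1
        calc x i ≤ |x i| := le_abs_self _
          _ ≤ ‖x‖ := by
              have := norm_le_pi_norm x i
              simpa [Real.norm_eq_abs] using this
          _ ≤ r := h1
      have hmax : r / c ≤ max 1 (r / c) := le_max_right _ _
      have hmax0 : 0 < max 1 (r / c) := lt_of_lt_of_le one_pos (le_max_left _ _)
      have : x i ≤ max 1 (r / c) * c := by
        have : r / c * c ≤ max 1 (r / c) * c := by gcongr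
        rw [div_mul_cancel₀ r hc0.ne'] at this
        linarith
      calc x i ≤ max 1 (r / c) * c := this
        _ ≤ max 1 (r / c) * xbar i := by gcongr; exact hcle i
        _ = (max 1 (r / c) • xbar) i := by simp [Pi.smul_apply]
  have hs0 : 0 < s := lt_of_lt_of_le one_pos hs1
  -- bound on F over K
  obtain ⟨R₀, hR₀⟩ := hbd.subset_closedBall 0
  have hxbar0 : (0 : Fin n → ℝ) ≤ xbar := fun i => (hxbar i).le
  have hsxbar0 : (0 : Fin n → ℝ) ≤ s • xbar := fun i => by
    have := (hxbar i).le
    simp only [Pi.smul_apply, smul_eq_mul, Pi.zero_apply]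
    positivity
  have hR₀0 : 0 ≤ R₀ := by
    obtain ⟨z0, hz0⟩ := hne
    have := hR₀ hz0
    rw [Metric.mem_closedBall] at this
    exact le_trans dist_nonneg this
  have hFbound : ∀ x ∈ K, ∀ z ∈ F x, ‖z‖ ≤ s * R₀ := by
    intro x hx z hz
    have hx0 : (0 : Fin n → ℝ) ≤ x := fun i => (hKpos hx i).le
    have hzs : z ∈ F (s • xbar) := hinc x (s • xbar) hx0 (hsK x hx) hz
    have h2 : (1 / s) • z ∈ F ((1 / s) • (s • xbar)) :=
      hcor (s • xbar) hsxbar0 (1 / s) (by positivity)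
        (by rw [div_le_one hs0]; linarith) (Set.smul_mem_smul_set hzs)
    rw [smul_smul, one_div_mul_cancel hs0.ne', one_smul] at h2
    have h3 := hR₀ h2
    rw [Metric.mem_closedBall, dist_zero_right, norm_smul, Real.norm_eq_abs,
      abs_of_pos (by positivity : (0:ℝ) < 1 / s)] at h3
    calc ‖z‖ = s * (1 / s * ‖z‖) := by field_simp
      _ ≤ s * R₀ := by gcongr
  -- the Lipschitz constant
  refine ⟨s * R₀ / a + 1, by positivity, fun x hx y hy z hz => ?_⟩
  set M : ℝ := s * R₀ / a + 1 with hM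
  set ε : ℝ := ‖x - y‖ with hε
  have hε0 : 0 ≤ ε := norm_nonneg _
  set t : ℝ := a / (a + ε) with ht
  have haε : 0 < a + ε := by linarith
  have ht0 : 0 < t := by positivity
  have ht1 : t ≤ 1 := by rw [ht, div_le_one haε]; linarith
  set u : Fin n → ℝ := ((a + ε) / a) • y with hu
  have hy0 : (0 : Fin n → ℝ) ≤ y := fun i => (hKpos hy i).le
  have hu0 : (0 : Fin n → ℝ) ≤ u := fun i => by
    have := hy0 i
    simp only [hu, Pi.smul_apply, smul_eq_mul, Pi.zero_apply] at *
    positivity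
  have hxu : x ≤ u := by
    intro i
    have hya : a ≤ y i := haK y hy i
    have hxy : x i ≤ y i + ε := by
      have h1 : x i - y i ≤ |x i - y i| := le_abs_self _
      have h2 : |x i - y i| ≤ ε := by
        have := norm_le_pi_norm (x - y) i
        simpa [Real.norm_eq_abs] using this
      linarith
    simp only [hu, Pi.smul_apply, smul_eq_mul]
    rw [div_mul_eq_mul_div, le_div_iff₀ ha0]
    nlinarith [mul_le_mul_of_nonneg_left hxy ha0.le, mul_le_mul_of_nonneg_left hya hε0]
  have hx0 : (0 : Fin n → ℝ) ≤ x := fun i => (hKpos hx i).le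
  have hzu : z ∈ F u := hinc x u hx0 hxu hz
  have htz : t • z ∈ F (t • u) :=
    hcor u hu0 t ht0 ht1 (Set.smul_mem_smul_set hzu)
  have htu : t • u = y := by
    rw [hu, smul_smul, ht]
    rw [show a / (a + ε) * ((a + ε) / a) = 1 by field_simp]
    rw [one_smul]
  rw [htu] at htz
  rw [Set.mem_add]
  refine ⟨t • z, htz, (1 - t) • z, ?_, by rw [← add_smul]; norm_num⟩
  rw [Metric.mem_closedBall, dist_zero_right, norm_smul, Real.norm_eq_abs,
    abs_of_nonneg (by linarith : (0:ℝ) ≤ 1 - t)]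
  have h1t : 1 - t = ε / (a + ε) := by rw [ht]; field_simp; ring
  have h2 : 1 - t ≤ ε / a := by rw [h1t]; gcongr; linarith
  have h3 : ‖z‖ ≤ s * R₀ := hFbound x hx z hz
  calc (1 - t) * ‖z‖ ≤ ε / a * (s * R₀) :=
        mul_le_mul h2 h3 (norm_nonneg _) (by positivity)
    _ ≤ M * ε := by rw [hM]; rw [add_mul, one_mul]; rw [div_mul_eq_mul_div, mul_comm ε]
                    rw [div_mul_eq_mul_div]; linarith [hε0]
end

section
/- Let F : ℝ₊ⁿ ⇉ ℝ₊ᵐ be an increasing co-radiant mapping taking only normal values. Then F is lower semicontinuous at every x ∈ dom(F) ∩ ℝ₊₊ⁿ, i.e., for every such x and every open set W ⊆ ℝ₊ᵐ with W ∩ F(x) ≠ ∅, there exists an open neighborhood V of x in ℝ₊ⁿ such that W ∩ F(x′) ≠ ∅ for every x′ ∈ V. -/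
/-!
Pick `y ∈ W ∩ F x` and shrink it to `t • y` with `t < 1` close enough to `1` that it stays in
the open set `W`. Co-radiance puts `t • y` into `F (t • x)`, and since `x` is strictly positive,
`t • x` lies strictly below `x` in every coordinate; the open box of all `x'` with
`t * x i < x' i` for every `i` is then a neighbourhood of `x` on which monotonicity gives
`t • y ∈ F x'`.
-/

open scoped Pointwise

open Set Filter Topology

lemma exists_smul_mem_of_mem_isOpen {E : Type*} [AddCommMonoid E] [Module ℝ E]
    [TopologicalSpace E] [ContinuousSMul ℝ E] {W : Set E} (hW : IsOpen W) {y : E}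
    (hy : y ∈ W) : ∃ t : ℝ, 0 < t ∧ t < 1 ∧ t • y ∈ W := by
  have hnhds : ∀ᶠ s : ℝ in 𝓝 1, s • y ∈ W :=
    (continuous_id.smul continuous_const).continuousAt.preimage_mem_nhds
      (hW.mem_nhds (by simpa using hy))
  obtain ⟨t, htW, ht⟩ :=
    ((hnhds.filter_mono nhdsWithin_le_nhds).and (Ioo_mem_nhdsLT zero_lt_one)).exists
  exact ⟨t, ht.1, ht.2, htW⟩

lemma smul_mem_of_smul_le {n m : ℕ} {F : (Fin n → ℝ) → Set (Fin m → ℝ)}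
    (hinc : IncreasingMap F) (hcor : CoRadiantMap F) {x x' : Fin n → ℝ} {y : Fin m → ℝ}
    {t : ℝ} (hx : 0 ≤ x) (ht0 : 0 < t) (ht1 : t ≤ 1) (hy : y ∈ F x) (hle : t • x ≤ x') :
    t • y ∈ F x' :=
  hinc (t • x) x' (smul_nonneg ht0.le hx) hle (hcor x hx t ht0 ht1 (smul_mem_smul_set hy))

theorem stmt_8_general {n m : ℕ} (F : (Fin n → ℝ) → Set (Fin m → ℝ))
    (hinc : IncreasingMap F) (hcor : CoRadiantMap F) :
    ∀ x : Fin n → ℝ, (∀ i, 0 < x i) → (F x).Nonempty →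
      ∀ W : Set (Fin m → ℝ), IsOpen W → (W ∩ F x).Nonempty →
        ∃ V : Set (Fin n → ℝ), IsOpen V ∧ x ∈ V ∧
          ∀ x' ∈ V, 0 ≤ x' → (W ∩ F x').Nonempty := by
  intro x hx _ W hW ⟨y, hyW, hyF⟩
  obtain ⟨t, ht0, ht1, htW⟩ := exists_smul_mem_of_mem_isOpen hW hyW
  refine ⟨univ.pi fun i => Ioi (t * x i), isOpen_set_pi finite_univ fun i _ => isOpen_Ioi,
    mem_univ_pi.2 fun i => mul_lt_of_lt_one_left (hx i) ht1, fun x' hx' _ => ⟨t • y, htW, ?_⟩⟩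
  exact smul_mem_of_smul_le hinc hcor (fun i => (hx i).le) ht0 ht1.le hyF
    fun i => (mem_univ_pi.1 hx' i).le

theorem stmt_8 {n m : ℕ} (F : (Fin n → ℝ) → Set (Fin m → ℝ))
    (hval : ∀ x : Fin n → ℝ, 0 ≤ x → ∀ y ∈ F x, 0 ≤ y)
    (hinc : IncreasingMap F) (hcor : CoRadiantMap F)
    (hnorm : ∀ x : Fin n → ℝ, 0 ≤ x → IsNormal (F x)) :
    ∀ x : Fin n → ℝ, (∀ i, 0 < x i) → (F x).Nonempty →
      ∀ W : Set (Fin m → ℝ), IsOpen W → (W ∩ F x).Nonempty →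
        ∃ V : Set (Fin n → ℝ), IsOpen V ∧ x ∈ V ∧
          ∀ x' ∈ V, 0 ≤ x' → (W ∩ F x').Nonempty :=
  stmt_8_general F hinc hcor
end

section
/- Let F : ℝ₊ⁿ ⇉ ℝ₊ᵐ be an increasing co-radiant mapping taking only compact normal values. Then F is upper semicontinuous at every x ∈ dom(F) ∩ ℝ₊₊ⁿ, i.e., for every such x and every open set V ⊆ ℝ₊ᵐ with F(x) ⊆ V, there exists an open neighborhood U of x in ℝ₊ⁿ such that F(x′) ⊆ V for every x′ ∈ U. -/
open scoped Pointwise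

theorem stmt_9 {n m : ℕ} (F : (Fin n → ℝ) → Set (Fin m → ℝ))
    (hval : ∀ x : Fin n → ℝ, 0 ≤ x → ∀ y ∈ F x, 0 ≤ y)
    (hinc : IncreasingMap F) (hcor : CoRadiantMap F)
    (hcpt : ∀ x : Fin n → ℝ, 0 ≤ x → IsCompact (F x))
    (hnorm : ∀ x : Fin n → ℝ, 0 ≤ x → IsNormal (F x)) :
    ∀ x : Fin n → ℝ, (∀ i, 0 < x i) → (F x).Nonempty →
      ∀ V : Set (Fin m → ℝ), IsOpen V → F x ⊆ V →
        ∃ U : Set (Fin n → ℝ), IsOpen U ∧ x ∈ U ∧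
          ∀ x' ∈ U, 0 ≤ x' → F x' ⊆ V := by

  intro x hx hne V hV hFV
  have hx0 : (0:Fin n → ℝ) ≤ x := fun i => (hx i).le
  have hK : IsCompact (F x) := hcpt x hx0
  -- find δ > 0 with thickening δ (F x) ⊆ V
  obtain ⟨δ, hδ, hthick⟩ := hK.exists_thickening_subset_open hV hFV
  obtain ⟨M, hM0, hM⟩ : ∃ M : ℝ, 0 < M ∧ ∀ y ∈ F x, ‖y‖ ≤ M := by
    obtain ⟨R, hR⟩ := hK.isBounded.exists_norm_le
    exact ⟨R + 1, lt_of_lt_of_le (by positivity : (0:ℝ) < ‖hne.some‖ + 1)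
      (by linarith [hR _ hne.some_mem]), fun y hy => by linarith [hR y hy]⟩
  set s : ℝ := 1 + δ / (2 * M) with hs_def
  have hs1 : 1 < s := by
    have h : 0 < δ / (2 * M) := by positivity
    rw [hs_def]; linarith
  have hs0 : 0 < s := by linarith
  -- s • F x ⊆ V
  have hsV : s • F x ⊆ V := by
    rintro _ ⟨y, hy, rfl⟩
    apply hthick
    rw [Metric.mem_thickening_iff]
    refine ⟨y, hy, ?_⟩
    have : dist (s • y) y = (s - 1) * ‖y‖ := by
      rw [dist_eq_norm]
      have : s • y - y = (s - 1) • y := by module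
      rw [this, norm_smul, Real.norm_eq_abs, abs_of_nonneg (by linarith)]
    rw [this]
    calc (s - 1) * ‖y‖ ≤ (s - 1) * M := by
          apply mul_le_mul_of_nonneg_left (hM y hy) (by linarith)
      _ = δ / (2 * M) * M := by rw [hs_def]; ring
      _ = δ / 2 := by field_simp
      _ < δ := by linarith
  -- F (s • x) ⊆ s • F x
  have hFs : F (s • x) ⊆ s • F x := by
    intro y hy
    have hsx0 : (0:Fin n → ℝ) ≤ s • x := fun i => by
      have := (hx i).le; simpa using mul_nonneg hs0.le (hx i).le
    have h1 : s⁻¹ • F (s • x) ⊆ F (s⁻¹ • (s • x)) :=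
      hcor (s • x) hsx0 s⁻¹ (by positivity) (by
        rw [inv_le_one_iff₀]; right; linarith)
    have h2 : s⁻¹ • (s • x) = x := by
      rw [smul_smul, inv_mul_cancel₀ (ne_of_gt hs0), one_smul]
    have : s⁻¹ • y ∈ F x := by
      rw [← h2]; exact h1 ⟨y, hy, rfl⟩
    exact ⟨s⁻¹ • y, this, by
      show s • s⁻¹ • y = y
      rw [smul_smul, mul_inv_cancel₀ (ne_of_gt hs0), one_smul]⟩
  -- the neighborhood
  refine ⟨{x' | ∀ i, x' i < s * x i}, ?_, fun i => ?_, ?_⟩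
  · have : {x' : Fin n → ℝ | ∀ i, x' i < s * x i}
        = ⋂ i, (fun x' : Fin n → ℝ => x' i) ⁻¹' Set.Iio (s * x i) := by
      ext x'; simp [Set.mem_iInter]
    rw [this]
    exact isOpen_iInter_of_finite fun i =>
      (isOpen_Iio).preimage (continuous_apply i)
  · nlinarith [hx i]
  · intro x' hx' hx'0 y hy
    have hle : x' ≤ s • x := fun i => le_of_lt (by simpa using hx' i)
    exact hsV (hFs (hinc x' (s • x) hx'0 hle hy))
end

section
/- A nonempty closed set A ⊆ ℝ₊ᵖ is radiant if and only if for every x ∈ ℝ₊ᵖ \ A there exists a cone K ⊆ ℝ₊ᵖ such that x ∈ K and A ∩ (x + K) = ∅. Moreover, when A is radiant, for each x ∈ ℝ₊ᵖ \ A the cone K_{A,x} := { Σᵢ λᵢ (x + r e_i) : λᵢ > 0 for i with xᵢ > 0, λᵢ ≥ 0 for i with xᵢ = 0 } ∪ {0}, where r := d_∞(x, A) and the e_i are the standard unit vectors, is a convex cone contained in ℝ₊ᵖ with K_{A,x} \ {0} open in ℝ₊ᵖ, x ∈ K_{A,x}, and A ∩ (x + K_{A,x}) = ∅. -/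
open scoped Pointwise

/-- A nonempty set `C` is radiant if `c ∈ C` and `t ∈ (0, 1]` imply `t • c ∈ C`. -/
def Radiant {E : Type*} [SMul ℝ E] (C : Set E) : Prop :=
  ∀ c ∈ C, ∀ t : ℝ, 0 < t → t ≤ 1 → t • c ∈ C

/-- A set `K` is a cone if `t • k ∈ K` for every `k ∈ K` and `t > 0`. -/
def IsConeSet {E : Type*} [SMul ℝ E] (K : Set E) : Prop :=
  ∀ k ∈ K, ∀ t : ℝ, 0 < t → t • k ∈ K

/-- The cone `K_{A,x} = { ∑ᵢ λᵢ (x + r eᵢ) : λᵢ > 0 for i with xᵢ > 0, λᵢ ≥ 0 otherwise } ∪ {0}`. -/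
noncomputable def sepCone {p : ℕ} (x : Fin p → ℝ) (r : ℝ) : Set (Fin p → ℝ) :=
  {z | ∃ lam : Fin p → ℝ, (∀ i, 0 ≤ lam i) ∧ (∀ i, 0 < x i → 0 < lam i) ∧
    z = ∑ i, lam i • (x + r • (Pi.single i 1 : Fin p → ℝ))} ∪ {0}

/-! The radial contraction of `x + ∑ λᵢ (x + r eᵢ)` by the factor `1 / (1 + ∑ λᵢ)` lies within
distance `r ∑ λᵢ / (1 + ∑ λᵢ) < r` of `x`, so for a radiant `A` and `r = d_∞(x, A)` it cannot lie
in `A`; hence `A` misses `x + K_{A,x}`. Conversely, if `A` is not radiant, some `t • c` with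
`c ∈ A`, `t ∈ (0, 1)` lies outside `A`, and every cone `K ∋ t • c` contains `((1 - t) / t) • t • c`,
which puts `c` into `t • c + K`. -/

theorem pi_norm_le_sum_of_nonneg {ι : Type*} [Fintype ι] {f : ι → ℝ} (hf : 0 ≤ f) :
    ‖f‖ ≤ ∑ i, f i :=
  (pi_norm_le_iff_of_nonneg (Finset.sum_nonneg fun i _ => hf i)).mpr fun i => by
    rw [Real.norm_eq_abs, abs_of_nonneg (hf i)]
    exact Finset.single_le_sum (fun i _ => hf i) (Finset.mem_univ i)

section SepCone

variable {p : ℕ}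

theorem sum_smul_add_smul_single_eq (x lam : Fin p → ℝ) (r : ℝ) :
    ∑ i, lam i • (x + r • (Pi.single i 1 : Fin p → ℝ)) = (∑ i, lam i) • x + r • lam := by
  funext j
  simp only [Finset.sum_apply, Pi.smul_apply, Pi.add_apply, smul_eq_mul, Pi.single_apply,
    mul_ite, mul_one, mul_zero, mul_add, Finset.sum_add_distrib, Finset.sum_ite_eq,
    Finset.mem_univ, if_true, ← Finset.sum_mul]
  ring

theorem sepCone_subset_nonneg {x : Fin p → ℝ} {r : ℝ} (hx : 0 ≤ x) (hr : 0 ≤ r) :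
    sepCone x r ⊆ {z | 0 ≤ z} := by
  rintro z (⟨lam, h0, -, rfl⟩ | rfl)
  · rw [Set.mem_ofPred_eq, sum_smul_add_smul_single_eq]
    have hs : 0 ≤ ∑ i, lam i := Finset.sum_nonneg fun i _ => h0 i
    exact add_nonneg (smul_nonneg hs hx) (smul_nonneg hr (show 0 ≤ lam from h0))
  · exact Set.mem_ofPred_eq ▸ le_rfl

theorem isConeSet_sepCone (x : Fin p → ℝ) (r : ℝ) : IsConeSet (sepCone x r) := by
  rintro k (⟨lam, h0, hpos, rfl⟩ | rfl) t ht
  · refine Or.inl ⟨t • lam, fun i => mul_nonneg ht.le (h0 i),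
      fun i hi => mul_pos ht (hpos i hi), ?_⟩
    simp only [Finset.smul_sum, smul_smul, Pi.smul_apply, smul_eq_mul]
  · exact Or.inr (smul_zero t)

theorem add_mem_sepCone {x : Fin p → ℝ} {r : ℝ} {z w : Fin p → ℝ} (hz : z ∈ sepCone x r)
    (hw : w ∈ sepCone x r) : z + w ∈ sepCone x r := by
  rcases hz with ⟨lam, h0, hpos, rfl⟩ | rfl
  · rcases hw with ⟨mu, g0, -, rfl⟩ | rfl
    · refine Or.inl ⟨lam + mu, fun i => add_nonneg (h0 i) (g0 i),
        fun i hi => add_pos_of_pos_of_nonneg (hpos i hi) (g0 i), ?_⟩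
      simp only [Pi.add_apply, add_smul, Finset.sum_add_distrib]
    · rw [add_zero]
      exact Or.inl ⟨lam, h0, hpos, rfl⟩
  · rwa [zero_add]

def sepConvexCone (x : Fin p → ℝ) (r : ℝ) : ConvexCone ℝ (Fin p → ℝ) where
  carrier := sepCone x r
  smul_mem' t ht _ hz := isConeSet_sepCone x r _ hz t ht
  add_mem' _ hz _ hw := add_mem_sepCone hz hw

theorem convex_sepCone (x : Fin p → ℝ) (r : ℝ) : Convex ℝ (sepCone x r) :=
  (sepConvexCone x r).convex

theorem self_mem_sepCone {x : Fin p → ℝ} {r : ℝ} (hx : 0 ≤ x) (hr : 0 < r) :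
    x ∈ sepCone x r := by
  have hD : 0 < r + ∑ j, x j := add_pos_of_pos_of_nonneg hr (Finset.sum_nonneg fun j _ => hx j)
  refine Or.inl ⟨fun i => x i / (r + ∑ j, x j), fun i => div_nonneg (hx i) hD.le,
    fun i hi => div_pos hi hD, ?_⟩
  rw [sum_smul_add_smul_single_eq]
  funext j
  simp only [Pi.add_apply, Pi.smul_apply, smul_eq_mul, ← Finset.sum_div]
  field_simp
  ring

/-- Away from `0`, `sepCone x r` is cut out of the orthant by strict linear inequalities; here
`(∑ⱼ zⱼ) / (r + ∑ⱼ xⱼ)` recovers the total weight `∑ᵢ λᵢ` of `z = ∑ᵢ λᵢ (x + r eᵢ)`. -/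
theorem mem_sepCone_diff_zero_iff {x : Fin p → ℝ} {r : ℝ} (hx : 0 ≤ x) (hr : 0 < r)
    (z : Fin p → ℝ) :
    z ∈ sepCone x r \ {0} ↔ 0 ≤ z ∧ 0 < ∑ j, z j ∧
      ∀ i, 0 < x i → (∑ j, z j) / (r + ∑ j, x j) * x i < z i := by
  have hD : 0 < r + ∑ j, x j := add_pos_of_pos_of_nonneg hr (Finset.sum_nonneg fun j _ => hx j)
  constructor
  · rintro ⟨hz, hz0⟩
    have hzn : 0 ≤ z := sepCone_subset_nonneg hx hr.le hz
    have hsum : 0 < ∑ j, z j := by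
      obtain ⟨j, hj⟩ := Function.ne_iff.mp hz0
      exact Finset.sum_pos' (fun i _ => hzn i) ⟨j, Finset.mem_univ j, (hzn j).lt_of_ne' hj⟩
    refine ⟨hzn, hsum, ?_⟩
    rcases hz with ⟨lam, -, hpos, rfl⟩ | rfl
    · have hweight : (∑ j, ((∑ i, lam i) • x + r • lam) j) / (r + ∑ j, x j) = ∑ i, lam i := by
        rw [div_eq_iff hD.ne']
        simp only [Pi.add_apply, Pi.smul_apply, smul_eq_mul, Finset.sum_add_distrib,
          ← Finset.mul_sum]
        ring
      intro i hi
      rw [sum_smul_add_smul_single_eq, hweight]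
      simp only [Pi.add_apply, Pi.smul_apply, smul_eq_mul]
      nlinarith [hpos i hi]
    · exact absurd rfl hz0
  · rintro ⟨hzn, hsum, hlt⟩
    set s := (∑ j, z j) / (r + ∑ j, x j)
    have hle : ∀ i, s * x i ≤ z i := fun i => by
      rcases (show (0 : ℝ) ≤ x i from hx i).eq_or_lt with hxi | hxi
      · rw [← hxi, mul_zero]; exact hzn i
      · exact (hlt i hxi).le
    refine ⟨Or.inl ⟨fun i => (z i - s * x i) / r, fun i => div_nonneg (by linarith [hle i]) hr.le,
      fun i hi => div_pos (by linarith [hlt i hi]) hr, ?_⟩, ?_⟩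
    · have hweight : ∑ i, (z i - s * x i) / r = s := by
        have h1 : s * (r + ∑ j, x j) = ∑ j, z j := div_mul_cancel₀ _ hD.ne'
        rw [← Finset.sum_div, Finset.sum_sub_distrib, ← Finset.mul_sum, div_eq_iff hr.ne']
        linarith
      rw [sum_smul_add_smul_single_eq, hweight]
      funext j
      simp only [Pi.add_apply, Pi.smul_apply, smul_eq_mul]
      field_simp
      ring
    · rintro rfl
      simp at hsum

theorem exists_isOpen_sepCone_diff_zero_eq {x : Fin p → ℝ} {r : ℝ} (hx : 0 ≤ x) (hr : 0 < r) :
    ∃ U : Set (Fin p → ℝ), IsOpen U ∧ sepCone x r \ {0} = U ∩ {z | 0 ≤ z} := by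
  have hsum : Continuous fun z : Fin p → ℝ => ∑ j, z j := by fun_prop
  refine ⟨{z | 0 < ∑ j, z j} ∩
      ⋂ i ∈ {i | 0 < x i}, {z | (∑ j, z j) / (r + ∑ j, x j) * x i < z i}, ?_, ?_⟩
  · refine (isOpen_lt continuous_const hsum).inter
      ((Set.toFinite _).isOpen_biInter fun i _ => isOpen_lt (by fun_prop) (continuous_apply i))
  · ext z
    simp only [mem_sepCone_diff_zero_iff hx hr, Set.mem_inter_iff, Set.mem_iInter]
    tauto

theorem inter_singleton_add_sepCone_eq_empty {A : Set (Fin p → ℝ)} (hrad : Radiant A)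
    {x : Fin p → ℝ} (hxA : x ∉ A) : A ∩ ({x} + sepCone x (Metric.infDist x A)) = ∅ := by
  set r := Metric.infDist x A
  have hr : 0 ≤ r := Metric.infDist_nonneg
  rw [Set.singleton_add]
  refine Set.eq_empty_of_forall_notMem ?_
  rintro _ ⟨ha, k, hk, rfl⟩
  rcases hk with ⟨lam, h0, -, rfl⟩ | rfl
  · set s := ∑ i, lam i
    have hs : 0 ≤ s := Finset.sum_nonneg fun i _ => h0 i
    have hshrink : (1 + s)⁻¹ • (x + ∑ i, lam i • (x + r • (Pi.single i 1 : Fin p → ℝ))) =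
        x + (r / (1 + s)) • lam := by
      rw [sum_smul_add_smul_single_eq]
      funext j
      simp only [Pi.smul_apply, Pi.add_apply, smul_eq_mul]
      field_simp
      ring
    have hyA := hrad _ ha (1 + s)⁻¹ (by positivity) (inv_le_one_of_one_le₀ (by linarith))
    rw [hshrink] at hyA
    have hdist : r ≤ r / (1 + s) * s := calc
      r ≤ dist x (x + (r / (1 + s)) • lam) := Metric.infDist_le_dist_of_mem hyA
      _ = r / (1 + s) * ‖lam‖ := by
        rw [dist_self_add_right, norm_smul, Real.norm_of_nonneg (by positivity)]
      _ ≤ r / (1 + s) * s := by gcongr; exact pi_norm_le_sum_of_nonneg h0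
    have hr0 : r = 0 := by
      rw [div_mul_eq_mul_div, le_div_iff₀ (by positivity)] at hdist
      linarith
    rw [hr0, zero_div, zero_smul, add_zero] at hyA
    exact hxA hyA
  · exact hxA (by simpa using ha)

end SepCone

theorem Radiant.of_forall_exists_isConeSet {E : Type*} [AddCommGroup E] [PartialOrder E]
    [Module ℝ E] [PosSMulMono ℝ E] {A : Set E} (hA : ∀ x ∈ A, 0 ≤ x)
    (h : ∀ x : E, 0 ≤ x → x ∉ A → ∃ K : Set E, IsConeSet K ∧ x ∈ K ∧ A ∩ ({x} + K) = ∅) :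
    Radiant A := by
  intro c hc t ht0 ht1
  by_contra htc
  have ht1' : t < 1 := ht1.lt_of_ne (by rintro rfl; exact htc (by rwa [one_smul]))
  obtain ⟨K, hKcone, htK, hdisj⟩ := h (t • c) (smul_nonneg ht0.le (hA c hc)) htc
  have hcK : c ∈ {t • c} + K := by
    refine Set.mem_add.mpr ⟨t • c, rfl, ((1 - t) / t) • t • c,
      hKcone _ htK _ (div_pos (by linarith) ht0), ?_⟩
    rw [smul_smul, div_mul_cancel₀ _ ht0.ne', ← add_smul, add_sub_cancel, one_smul]
  exact (Set.eq_empty_iff_forall_notMem.mp hdisj) c ⟨hc, hcK⟩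

theorem stmt_14 {p : ℕ} (A : Set (Fin p → ℝ)) (hA : ∀ x ∈ A, 0 ≤ x)
    (hne : A.Nonempty) (hcl : IsClosed A) :
    (Radiant A ↔ ∀ x : Fin p → ℝ, 0 ≤ x → x ∉ A →
      ∃ K : Set (Fin p → ℝ), K ⊆ {z | 0 ≤ z} ∧ IsConeSet K ∧ x ∈ K ∧
        A ∩ ({x} + K) = ∅) ∧
    (Radiant A → ∀ x : Fin p → ℝ, 0 ≤ x → x ∉ A →
      sepCone x (Metric.infDist x A) ⊆ {z | 0 ≤ z} ∧
      Convex ℝ (sepCone x (Metric.infDist x A)) ∧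
      IsConeSet (sepCone x (Metric.infDist x A)) ∧
      (∃ U : Set (Fin p → ℝ), IsOpen U ∧
        sepCone x (Metric.infDist x A) \ {0} = U ∩ {z | 0 ≤ z}) ∧
      x ∈ sepCone x (Metric.infDist x A) ∧
      A ∩ ({x} + sepCone x (Metric.infDist x A)) = ∅) := by
  have hr : ∀ x, x ∉ A → 0 < Metric.infDist x A := fun x => (hcl.notMem_iff_infDist_pos hne).mp
  refine ⟨⟨fun hrad x hx hxA => ?_, fun h => ?_⟩, fun hrad x hx hxA => ?_⟩
  · exact ⟨_, sepCone_subset_nonneg hx (hr x hxA).le, isConeSet_sepCone _ _,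
      self_mem_sepCone hx (hr x hxA), inter_singleton_add_sepCone_eq_empty hrad hxA⟩
  · exact Radiant.of_forall_exists_isConeSet hA fun x hx hxA => (h x hx hxA).imp fun _ hK => hK.2
  · exact ⟨sepCone_subset_nonneg hx (hr x hxA).le, convex_sepCone _ _, isConeSet_sepCone _ _,
      exists_isOpen_sepCone_diff_zero_eq hx (hr x hxA), self_mem_sepCone hx (hr x hxA),
      inter_singleton_add_sepCone_eq_empty hrad hxA⟩
end

section
/- Let F : ℝ₊ⁿ ⇉ ℝ₊ᵐ be a co-radiant and increasing mapping taking only normal values, with gr(F) closed and nonempty. Then for every (x, y) ∈ (ℝ₊ⁿ × ℝ₊ᵐ) \ gr(F) there exists a convex cone K ⊆ ℝ₊ⁿ × ℝ₊ᵐ containing (x, y) such that K \ {(0,0)} is open in ℝ₊ⁿ × ℝ₊ᵐ and gr(F) ∩ ((x, y) + K + (−ℝ₊ⁿ) × ℝ₊ᵐ) = ∅. -/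
/-!
Since `gr F` is closed, nonempty and stable under the scalings `t ∈ (0, 1]`, it contains the
origin. Pick a ball `B` around `(x, y)` missing `gr F` (so `0 ∉ B`), and let `K` be the cone
generated by `B`, cut down to the orthant. If `(x, y) + r • b + d ∈ gr F` with `b ∈ B`, `r > 0`
and `d ∈ (−ℝ₊ⁿ) × ℝ₊ᵐ`, then monotonicity and normality give `(x, y) + r • b ∈ gr F`, and the
co-radiant scaling by `(1 + r)⁻¹` lands on a convex combination of `(x, y)` and `b`, a point of
`B`: contradiction.
-/

open scoped Pointwise

open Set Filter Topology Metric ConvexCone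

namespace ConvexCone

variable {𝕜 E : Type*} [Field 𝕜] [LinearOrder 𝕜] [IsStrictOrderedRing 𝕜] [AddCommGroup E]
  [Module 𝕜 E] {s : Set E}

lemma isOpen_hull_of_convex [TopologicalSpace E] [ContinuousConstSMul 𝕜 E] (hs : Convex 𝕜 s)
    (ho : IsOpen s) : IsOpen (hull 𝕜 s : Set E) := by
  have hunion : (hull 𝕜 s : Set E) = ⋃ r ∈ Ioi (0 : 𝕜), r • s := by
    ext; simp [mem_hull_of_convex hs]
  rw [hunion]
  exact isOpen_biUnion fun r hr => ho.smul₀ (ne_of_gt hr)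

lemma zero_notMem_hull_of_convex (hs : Convex 𝕜 s) (h0 : (0 : E) ∉ s) :
    (0 : E) ∉ hull 𝕜 s := by
  rw [mem_hull_of_convex hs]
  rintro ⟨r, hr, h⟩
  exact h0 ((zero_mem_smul_set_iff hr.ne').1 h)

end ConvexCone

lemma zero_mem_of_isClosed_of_smul_mem {E : Type*} [TopologicalSpace E] [AddCommGroup E]
    [Module ℝ E] [ContinuousSMul ℝ E] {S : Set E} (hS : IsClosed S) (hne : S.Nonempty)
    (hsmul : ∀ p ∈ S, ∀ t : ℝ, 0 < t → t ≤ 1 → t • p ∈ S) : (0 : E) ∈ S := by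
  obtain ⟨p, hp⟩ := hne
  have hlim : Tendsto (fun t : ℝ => t • p) (𝓝[>] 0) (𝓝 0) := by
    simpa using ((tendsto_id (x := 𝓝 (0 : ℝ))).mono_left nhdsWithin_le_nhds).smul_const p
  refine hS.mem_of_tendsto hlim ?_
  filter_upwards [Ioc_mem_nhdsGT one_pos] with t ht using hsmul p hp t ht.1 ht.2

theorem inter_singleton_add_hull_inf_add_eq_empty {E : Type*} [AddCommGroup E] [Module ℝ E]
    {G D B : Set E} {P : ConvexCone ℝ E}
    (hsmul : ∀ p ∈ G, ∀ t : ℝ, 0 < t → t ≤ 1 → t • p ∈ G)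
    (hdown : ∀ q ∈ P, ∀ d ∈ D, q + d ∈ G → q ∈ G)
    {w : E} (hwP : w ∈ P) (hB : Convex ℝ B) (hwB : w ∈ B) (hBG : Disjoint B G) :
    G ∩ ({w} + (hull ℝ B ⊓ P : ConvexCone ℝ E) + D) = ∅ := by
  rw [eq_empty_iff_forall_notMem]
  rintro _ ⟨hG, _, ⟨a, ha, k, ⟨hkB, hkP⟩, rfl⟩, d, hd, rfl⟩
  rw [mem_singleton_iff] at ha
  subst a
  obtain ⟨r, hr, b, hb, rfl⟩ := (mem_hull_of_convex hB).1 hkB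
  have hwb : w + r • b ∈ G := hdown _ (P.add_mem hwP hkP) d hd hG
  have hscaled : (1 + r)⁻¹ • (w + r • b) ∈ B := by
    have hr1 : (1 + r) ≠ 0 := by positivity
    convert hB hwB hb (by positivity : 0 ≤ (1 + r)⁻¹) (by positivity : 0 ≤ r / (1 + r))
      (by field_simp) using 1
    rw [smul_add, smul_smul, div_eq_inv_mul]
  exact hBG.notMem_of_mem_left hscaled
    (hsmul _ hwb _ (by positivity) (inv_le_one_of_one_le₀ (by linarith)))

section Graph

variable {n m : ℕ} {F : (Fin n → ℝ) → Set (Fin m → ℝ)}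

lemma CoRadiantMap.smul_mem_graph (hcor : CoRadiantMap F) :
    ∀ p ∈ graph F, ∀ t : ℝ, 0 < t → t ≤ 1 → t • p ∈ graph F := fun p hp t ht₀ ht₁ =>
  ⟨smul_nonneg ht₀.le hp.1, hcor p.1 hp.1 t ht₀ ht₁ (smul_mem_smul_set hp.2)⟩

lemma mem_graph_of_add_mem_graph (hinc : IncreasingMap F)
    (hnorm : ∀ x : Fin n → ℝ, 0 ≤ x → IsNormal (F x)) {q d : (Fin n → ℝ) × (Fin m → ℝ)}
    (hq : 0 ≤ q) (hd : d ∈ {a : Fin n → ℝ | a ≤ 0} ×ˢ {b : Fin m → ℝ | 0 ≤ b})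
    (h : q + d ∈ graph F) : q ∈ graph F :=
  ⟨hq.1, hnorm q.1 hq.1 _ (hinc _ _ h.1 (add_le_of_nonpos_right hd.1) h.2) _ hq.2
    (le_add_of_nonneg_right hd.2)⟩

end Graph

theorem stmt_15_general {n m : ℕ} (F : (Fin n → ℝ) → Set (Fin m → ℝ))
    (hinc : IncreasingMap F) (hcor : CoRadiantMap F)
    (hnorm : ∀ x : Fin n → ℝ, 0 ≤ x → IsNormal (F x))
    (hclosed : IsClosed (graph F)) (hne : (graph F).Nonempty) :
    ∀ (x : Fin n → ℝ) (y : Fin m → ℝ), 0 ≤ x → 0 ≤ y → (x, y) ∉ graph F →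
      ∃ K : Set ((Fin n → ℝ) × (Fin m → ℝ)),
        K ⊆ {p | 0 ≤ p.1 ∧ 0 ≤ p.2} ∧ Convex ℝ K ∧ IsConeSet K ∧ (x, y) ∈ K ∧
        (∃ U : Set ((Fin n → ℝ) × (Fin m → ℝ)), IsOpen U ∧
          K \ {0} = U ∩ {p | 0 ≤ p.1 ∧ 0 ≤ p.2}) ∧
        graph F ∩ ({(x, y)} + K +
          {q : Fin n → ℝ | q ≤ 0} ×ˢ {r : Fin m → ℝ | 0 ≤ r}) = ∅ := by
  intro x y hx hy hxy
  obtain ⟨ε, hε, hball⟩ := isOpen_iff.mp hclosed.isOpen_compl (x, y) hxy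
  have hdisj : Disjoint (ball (x, y) ε) (graph F) := subset_compl_iff_disjoint_right.mp hball
  have h0 : (0 : (Fin n → ℝ) × (Fin m → ℝ)) ∈ graph F :=
    zero_mem_of_isClosed_of_smul_mem hclosed hne hcor.smul_mem_graph
  have h0K : (0 : (Fin n → ℝ) × (Fin m → ℝ)) ∉ hull ℝ (ball (x, y) ε) :=
    zero_notMem_hull_of_convex (convex_ball _ _) (hdisj.notMem_of_mem_right h0)
  let K := hull ℝ (ball (x, y) ε) ⊓ positive ℝ ((Fin n → ℝ) × (Fin m → ℝ))
  refine ⟨K, fun _ hk => hk.2, K.convex, fun _ hk _ ht => K.smul_mem ht hk,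
    ⟨subset_hull (mem_ball_self hε), hx, hy⟩, ?_, ?_⟩
  · exact ⟨hull ℝ (ball (x, y) ε), isOpen_hull_of_convex (convex_ball _ _) isOpen_ball,
      sdiff_singleton_eq_self fun h => h0K h.1⟩
  · exact inter_singleton_add_hull_inf_add_eq_empty hcor.smul_mem_graph
      (fun _ hq _ hd => mem_graph_of_add_mem_graph hinc hnorm hq hd) ⟨hx, hy⟩
      (convex_ball _ _) (mem_ball_self hε) hdisj

theorem stmt_15 {n m : ℕ} (F : (Fin n → ℝ) → Set (Fin m → ℝ))
    (hval : ∀ x : Fin n → ℝ, 0 ≤ x → ∀ y ∈ F x, 0 ≤ y)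
    (hinc : IncreasingMap F) (hcor : CoRadiantMap F)
    (hnorm : ∀ x : Fin n → ℝ, 0 ≤ x → IsNormal (F x))
    (hclosed : IsClosed (graph F)) (hne : (graph F).Nonempty) :
    ∀ (x : Fin n → ℝ) (y : Fin m → ℝ), 0 ≤ x → 0 ≤ y → (x, y) ∉ graph F →
      ∃ K : Set ((Fin n → ℝ) × (Fin m → ℝ)),
        K ⊆ {p | 0 ≤ p.1 ∧ 0 ≤ p.2} ∧ Convex ℝ K ∧ IsConeSet K ∧ (x, y) ∈ K ∧
        (∃ U : Set ((Fin n → ℝ) × (Fin m → ℝ)), IsOpen U ∧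
          K \ {0} = U ∩ {p | 0 ≤ p.1 ∧ 0 ≤ p.2}) ∧
        graph F ∩ ({(x, y)} + K +
          {q : Fin n → ℝ | q ≤ 0} ×ˢ {r : Fin m → ℝ | 0 ≤ r}) = ∅ :=
  stmt_15_general F hinc hcor hnorm hclosed hne
end
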